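/- arXiv:2511.00575 — 4 statements merged into one kernel-verified Lean document; each statement's English description precedes it below -/
import Mathlib

section
/- For every natural number n and every natural number p, if n = 7p or n = 7p+1 then the number of indices i ∈ {0,1,...,n} with P i even equals 3p+1; if n = 7p+2 it equals 3p+2; if n = 7p+3 or n = 7p+4 it equals 3p+3; and if n = 7p+5 or n = 7p+6 it equals 3p+4. -/
/-- The reindexed Perrin sequence: `P 0 = 0`, `P 1 = 3`, `P 2 = 0`, `P 3 = 2`,
and `P n = P (n-2) + P (n-3)` thereafter
(so `P 4 = 3`, `P 5 = 2`, `P 6 = 5`, ...). -/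
def perrin : ℕ → ℕ
  | 0 => 0
  | 1 => 3
  | 2 => 0
  | 3 => 2
  | n + 4 => perrin (n + 2) + perrin (n + 1)

/-- The induced edge label: `f` assigns to each vertex the index of a Perrin number,
and an edge `uv` gets the label `(P (f u) + P (f v)) mod 2`. -/
def perrinEdgeLabel {V : Type*} (f : V → ℕ) : Sym2 V → ℕ :=
  Sym2.lift ⟨fun u v => (perrin (f u) + perrin (f v)) % 2, fun u v => by simp [Nat.add_comm]⟩

/-- `eCount G f i` is the number of edges of `G` whose induced label under `f` is `i`. -/
noncomputable def eCount {V : Type*} (G : SimpleGraph V) (f : V → ℕ) (i : ℕ) : ℕ :=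
  {e | e ∈ G.edgeSet ∧ perrinEdgeLabel f e = i}.ncard

/-- A finite simple graph `G` on `N` vertices is Perrin cordial if there is an injective
labeling of its vertices by indices in `{0, 1, ..., N}` such that the numbers of edges
with induced label `0` and `1` differ by at most `1`. -/
def IsPerrinCordial {V : Type*} [Fintype V] (G : SimpleGraph V) : Prop :=
  ∃ f : V → Fin (Fintype.card V + 1), Function.Injective f ∧
    |(eCount G (fun v => (f v : ℕ)) 0 : ℤ) - (eCount G (fun v => (f v : ℕ)) 1 : ℤ)| ≤ 1

/-!
From index `1` on, the parities of the Perrin numbers repeat with period `7`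
(odd, even, even, odd, even, odd, odd), as an induction on the recurrence shows. Each full period
contributes three even terms, so the count up to `7 p + r` is `3 p` plus the count up to `r`.
-/

namespace Nat

variable {p : ℕ → Prop} [DecidablePred p] {a : ℕ}

theorem count_add_of_periodic (hp : Function.Periodic p a) (n : ℕ) :
    count p (a + n) = count p a + count p n := by
  have hshift : (fun k => p (a + k)) = p := funext fun k => by rw [add_comm, hp]
  simp only [count_add, hshift]

theorem count_mul_add_of_periodic (hp : Function.Periodic p a) (m n : ℕ) :
    count p (a * m + n) = m * count p a + count p n := by
  induction m with
  | zero => simp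
  | succ m ih => rw [mul_add_one, add_comm (a * m), add_assoc, count_add_of_periodic hp, ih]; ring

end Nat

theorem even_perrin_add_eight_iff : ∀ n, Even (perrin (n + 8)) ↔ Even (perrin (n + 1))
  | 0 | 1 | 2 => by decide
  | n + 3 => by
    show Even (perrin (n + 9) + perrin (n + 8)) ↔ Even (perrin (n + 2) + perrin (n + 1))
    rw [Nat.even_add, Nat.even_add, even_perrin_add_eight_iff n, even_perrin_add_eight_iff (n + 1)]

theorem periodic_even_perrin_succ : Function.Periodic (fun k => Even (perrin (k + 1))) 7 :=
  fun k => propext (even_perrin_add_eight_iff k)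

theorem count_even_perrin_succ (n : ℕ) :
    Nat.count (fun i => Even (perrin i)) (n + 1) =
      3 * (n / 7) + Nat.count (fun i => Even (perrin i)) (n % 7 + 1) := by
  have hperiod : Nat.count (fun k => Even (perrin (k + 1))) 7 = 3 := by decide
  rw [Nat.count_succ', Nat.count_succ']
  nth_rewrite 1 [← Nat.div_add_mod n 7]
  rw [Nat.count_mul_add_of_periodic periodic_even_perrin_succ, hperiod]
  ring

/-- the number of indices `i ∈ {0, ..., n}` with `P i` even. -/
theorem perrin_even_count (n p : ℕ) :
    ((n = 7 * p ∨ n = 7 * p + 1) →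
      ((Finset.range (n + 1)).filter (fun i => Even (perrin i))).card = 3 * p + 1) ∧
    (n = 7 * p + 2 →
      ((Finset.range (n + 1)).filter (fun i => Even (perrin i))).card = 3 * p + 2) ∧
    ((n = 7 * p + 3 ∨ n = 7 * p + 4) →
      ((Finset.range (n + 1)).filter (fun i => Even (perrin i))).card = 3 * p + 3) ∧
    ((n = 7 * p + 5 ∨ n = 7 * p + 6) →
      ((Finset.range (n + 1)).filter (fun i => Even (perrin i))).card = 3 * p + 4) := by
  simp only [← Nat.count_eq_card_filter_range]
  refine ⟨?_, ?_, ?_, ?_⟩ <;> rintro (rfl | rfl) <;> rw [count_even_perrin_succ] <;>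
    simp [Nat.mul_add_div, Nat.count_succ, perrin, Nat.even_iff]
end

section
/- For every natural number n ≥ 1, the path graph on n vertices is Perrin cordial. -/
/-!
Along the path `v₀ … v_{n-1}` the edges `v_{2j} v_{2j+1}` and `v_{2j+1} v_{2j+2}` get different
labels exactly when `P (f v_{2j})` and `P (f v_{2j+2})` differ in parity. So it suffices to label
the even positions with alternating parities `0, 1, 0, 1, …`, the odd positions being free.
Perrin parity is `7`-periodic from index `1` (pattern `1001011`), so any three consecutive indices
contain an odd and any four an even Perrin number. This gives enough indices of each parity in
`{0, …, n}` for Hall's marriage theorem to produce the injective labeling.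
-/

open Finset

lemma perrin_add_eight_mod_two (k : ℕ) : perrin (k + 8) % 2 = perrin (k + 1) % 2 := by
  induction k using Nat.strong_induction_on with
  | _ k ih =>
    match k with
    | 0 | 1 | 2 => decide
    | k + 3 =>
      have h₁ := ih (k + 1) (by omega)
      have h₂ := ih k (by omega)
      simp only [perrin] at h₁ h₂ ⊢
      omega

lemma perrin_succ_mod_two (k : ℕ) : perrin (k + 1) % 2 = perrin (k % 7 + 1) % 2 := by
  induction k using Nat.strong_induction_on with
  | _ k ih =>
    rcases lt_or_ge k 7 with hk | hk
    · rw [Nat.mod_eq_of_lt hk]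
    · obtain ⟨j, rfl⟩ := Nat.exists_eq_add_of_le hk
      rw [show 7 + j + 1 = j + 8 by omega, perrin_add_eight_mod_two, ih j (by omega)]
      congr 3
      omega

lemma exists_perrin_odd_mem_Ico {k : ℕ} (hk : 1 ≤ k) :
    ∃ j ∈ Ico k (k + 3), perrin j % 2 = 1 := by
  obtain ⟨k, rfl⟩ := Nat.exists_eq_add_of_le' hk
  have hwindow : ∀ r < 7, ∃ i < 3, perrin ((r + i) % 7 + 1) % 2 = 1 := by decide
  obtain ⟨i, hi, h⟩ := hwindow (k % 7) (k.mod_lt (by norm_num))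
  refine ⟨k + i + 1, mem_Ico.2 ⟨by omega, by omega⟩, ?_⟩
  rwa [perrin_succ_mod_two, ← Nat.mod_add_mod]

lemma exists_perrin_even_mem_Ico {k : ℕ} (hk : 1 ≤ k) :
    ∃ j ∈ Ico k (k + 4), perrin j % 2 = 0 := by
  obtain ⟨k, rfl⟩ := Nat.exists_eq_add_of_le' hk
  have hwindow : ∀ r < 7, ∃ i < 4, perrin ((r + i) % 7 + 1) % 2 = 0 := by decide
  obtain ⟨i, hi, h⟩ := hwindow (k % 7) (k.mod_lt (by norm_num))
  refine ⟨k + i + 1, mem_Ico.2 ⟨by omega, by omega⟩, ?_⟩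
  rwa [perrin_succ_mod_two, ← Nat.mod_add_mod]

lemma le_card_filter_Ico_of_forall_exists {p : ℕ → Prop} [DecidablePred p] {a w : ℕ}
    (h : ∀ k, a ≤ k → ∃ j ∈ Ico k (k + w), p j) (m : ℕ) :
    m ≤ #{j ∈ Ico a (a + w * m) | p j} := by
  induction m with
  | zero => simp
  | succ m ih =>
    obtain ⟨j, hj, hpj⟩ := h (a + w * m) (by omega)
    rw [mem_Ico] at hj
    have hsub :
        insert j {j ∈ Ico a (a + w * m) | p j} ⊆ {j ∈ Ico a (a + w * (m + 1)) | p j} := by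
      intro x hx
      simp only [mem_insert, mem_filter, mem_Ico] at hx ⊢
      rcases hx with rfl | hx
      · exact ⟨⟨by omega, by rw [Nat.mul_succ]; omega⟩, hpj⟩
      · exact ⟨⟨hx.1.1, by rw [Nat.mul_succ]; omega⟩, hx.2⟩
    have hj' : j ∉ {j ∈ Ico a (a + w * m) | p j} := by simp only [mem_filter, mem_Ico]; omega
    calc m + 1 ≤ #(insert j {j ∈ Ico a (a + w * m) | p j}) := by
          rw [card_insert_of_notMem hj']; omega
      _ ≤ _ := card_le_card hsub

lemma div_three_le_card_perrin_odd (n : ℕ) :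
    n / 3 ≤ #{k ∈ range (n + 1) | perrin k % 2 = 1} :=
  calc n / 3 ≤ #{k ∈ Ico 1 (1 + 3 * (n / 3)) | perrin k % 2 = 1} :=
        le_card_filter_Ico_of_forall_exists (fun _ => exists_perrin_odd_mem_Ico) _
    _ ≤ _ := card_le_card <|
        filter_subset_filter _ fun k => by simp only [mem_Ico, mem_range]; omega

lemma div_four_add_one_le_card_perrin_even (n : ℕ) :
    n / 4 + 1 ≤ #{k ∈ range (n + 1) | perrin k % 2 = 0} :=
  calc n / 4 + 1 ≤ #(insert 0 {k ∈ Ico 1 (1 + 4 * (n / 4)) | perrin k % 2 = 0}) := by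
        rw [card_insert_of_notMem (by simp)]
        exact Nat.add_le_add_right
          (le_card_filter_Ico_of_forall_exists (fun _ => exists_perrin_even_mem_Ico) _) 1
    _ ≤ _ := card_le_card <|
        insert_subset (by simp [perrin])
          (filter_subset_filter _ fun k => by simp only [mem_Ico, mem_range]; omega)

def imbalance (ℓ : ℕ → ℕ) (m : ℕ) : ℤ :=
  #{k ∈ range m | ℓ k = 0} - #{k ∈ range m | ℓ k = 1}

lemma imbalance_succ (ℓ : ℕ → ℕ) (m : ℕ) :
    imbalance ℓ (m + 1) =
      imbalance ℓ m + ((if ℓ m = 0 then 1 else 0) - (if ℓ m = 1 then 1 else 0)) := by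
  simp only [imbalance, card_filter, sum_range_succ]
  push_cast
  ring

lemma abs_imbalance_le_one (ℓ : ℕ → ℕ) (m : ℕ)
    (h : ∀ j, 2 * j + 1 < m → ℓ (2 * j) + ℓ (2 * j + 1) = 1) : |imbalance ℓ m| ≤ 1 := by
  have heven : ∀ j, 2 * j ≤ m → imbalance ℓ (2 * j) = 0 := by
    intro j
    induction j with
    | zero => simp [imbalance]
    | succ j ih =>
      intro hj
      have hpair := h j (by omega)
      rw [show 2 * (j + 1) = 2 * j + 1 + 1 by ring, imbalance_succ, imbalance_succ, ih (by omega)]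
      split_ifs <;> omega
  obtain ⟨j, rfl | rfl⟩ := Nat.even_or_odd' m
  · simp [heven j le_rfl]
  · rw [imbalance_succ, heven j (by omega)]
    split_ifs <;> simp

lemma perrinEdgeLabel_mk {V : Type*} (f : V → ℕ) (u v : V) :
    perrinEdgeLabel f s(u, v) = (perrin (f u) + perrin (f v)) % 2 := rfl

lemma eCount_pathGraph (n : ℕ) (g : ℕ → ℕ) (i : ℕ) :
    eCount (SimpleGraph.pathGraph n) (fun v => g v) i =
      #{k ∈ range (n - 1) | (perrin (g k) + perrin (g (k + 1))) % 2 = i} := by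
  rw [eCount, ← Set.ncard_coe_finset]
  symm
  refine Set.ncard_congr (fun k hk => s(⟨k, ?_⟩, ⟨k + 1, ?_⟩)) ?_ ?_ ?_
  · have := mem_range.1 (mem_filter.1 hk).1; omega
  · have := mem_range.1 (mem_filter.1 hk).1; omega
  · intro k hk
    simp only [coe_filter, mem_range, Set.mem_ofPred_eq] at hk
    simp [SimpleGraph.pathGraph_adj, perrinEdgeLabel_mk, hk.2]
  · intro k l _ _ hkl
    simp only [Sym2.eq_iff, Fin.mk.injEq] at hkl
    omega
  · intro e he
    induction e using Sym2.ind with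
    | _ u v =>
      obtain ⟨hadj, hlabel⟩ := he
      rw [SimpleGraph.mem_edgeSet, SimpleGraph.pathGraph_adj] at hadj
      rw [perrinEdgeLabel_mk] at hlabel
      rcases hadj with huv | hvu
      · refine ⟨u, ?_, by simp [huv]⟩
        rw [coe_filter, Set.mem_ofPred_eq, mem_range, huv]
        exact ⟨by omega, hlabel⟩
      · refine ⟨v, ?_, by simp [hvu]⟩
        rw [coe_filter, Set.mem_ofPred_eq, mem_range, hvu, add_comm]
        exact ⟨by omega, hlabel⟩

lemma card_filter_even_div_two_mod_two_le (n b : ℕ) :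
    #{i : Fin n | i.val % 2 = 0 ∧ i.val / 2 % 2 = b} ≤ (n + 3 - 2 * b) / 4 := by
  calc _ ≤ #(range ((n + 3 - 2 * b) / 4)) := by
        refine card_le_card_of_injOn (fun i => i.val / 4) (fun i hi => ?_) (fun i hi j hj hij => ?_)
        · simp only [coe_filter, mem_univ, true_and, Set.mem_ofPred_eq] at hi
          simp only [coe_range, Set.mem_Iio]
          omega
        · simp only [coe_filter, mem_univ, true_and, Set.mem_ofPred_eq] at hi hj
          exact Fin.ext (by simp only at hij; omega)
    _ = _ := card_range _

lemma card_filter_even_div_two_mod_two_le_card_perrin (n : ℕ) {b : ℕ} (hb : b < 2) :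
    #{i : Fin n | i.val % 2 = 0 ∧ i.val / 2 % 2 = b} ≤
      #{k ∈ range (n + 1) | perrin k % 2 = b} := by
  have hpos := card_filter_even_div_two_mod_two_le n b
  interval_cases b
  · have := div_four_add_one_le_card_perrin_even n
    omega
  · have := div_three_le_card_perrin_odd n
    omega

lemma exists_injective_alternating_on_even_positions (n : ℕ) :
    ∃ f : Fin n → ℕ, Function.Injective f ∧
      ∀ i : Fin n, f i ≤ n ∧ (i.val % 2 = 0 → perrin (f i) % 2 = i.val / 2 % 2) := by
  classical
  let t : Fin n → Finset ℕ := fun i =>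
    {k ∈ range (n + 1) | i.val % 2 = 0 → perrin k % 2 = i.val / 2 % 2}
  suffices hall : ∀ s : Finset (Fin n), #s ≤ #(s.biUnion t) by
    obtain ⟨f, hf, hft⟩ := (all_card_le_biUnion_card_iff_exists_injective t).1 hall
    refine ⟨f, hf, fun i => ?_⟩
    have := hft i
    simp only [t, mem_filter, mem_range] at this
    exact ⟨by omega, this.2⟩
  -- Hall's condition: positions all requiring parity `b` are matched by the indices of
  -- parity `b`; every other set of positions accepts every index.
  intro s
  by_cases hs : ∃ b, ∀ i ∈ s, i.val % 2 = 0 ∧ i.val / 2 % 2 = b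
  · obtain ⟨b, hb⟩ := hs
    obtain rfl | ⟨i, hi⟩ := s.eq_empty_or_nonempty
    · simp
    calc #s ≤ #{i : Fin n | i.val % 2 = 0 ∧ i.val / 2 % 2 = b} :=
          card_le_card fun j hj => by simpa using hb j hj
      _ ≤ #{k ∈ range (n + 1) | perrin k % 2 = b} :=
          card_filter_even_div_two_mod_two_le_card_perrin n (by have := hb i hi; omega)
      _ ≤ #(t i) := card_le_card fun k hk => by
          simp only [t, mem_filter] at hk ⊢
          exact ⟨hk.1, fun _ => by rw [hk.2, (hb i hi).2]⟩
      _ ≤ #(s.biUnion t) := card_le_card (subset_biUnion_of_mem t hi)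
  · push Not at hs
    calc #s ≤ n := card_le_univ s |>.trans_eq (Fintype.card_fin n)
      _ ≤ #(range (n + 1)) := by simp
      _ ≤ #(s.biUnion t) := card_le_card fun k hk => by
          obtain ⟨i, hi, hik⟩ := hs (1 - perrin k % 2)
          refine mem_biUnion.2 ⟨i, hi, mem_filter.2 ⟨hk, fun hi_even => ?_⟩⟩
          have := hik hi_even
          omega

lemma abs_eCount_pathGraph_sub_le_one (n : ℕ) (g : ℕ → ℕ)
    (h : ∀ j, 2 * j + 2 < n → perrin (g (2 * j)) % 2 ≠ perrin (g (2 * j + 2)) % 2) :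
    |(eCount (SimpleGraph.pathGraph n) (fun v => g v) 0 : ℤ) -
      eCount (SimpleGraph.pathGraph n) (fun v => g v) 1| ≤ 1 := by
  simp only [eCount_pathGraph]
  refine abs_imbalance_le_one _ (n - 1) fun j hj => ?_
  have := h j (by omega)
  simp only [show 2 * j + 1 + 1 = 2 * j + 2 from rfl]
  omega

theorem pathGraph_isPerrinCordial_general (n : ℕ) :
    IsPerrinCordial (SimpleGraph.pathGraph n) := by
  obtain ⟨f, hf, hfn⟩ := exists_injective_alternating_on_even_positions n
  let g : ℕ → ℕ := fun k => if hk : k < n then f ⟨k, hk⟩ else 0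
  have hg : ∀ v : Fin n, g v = f v := fun v => dif_pos v.isLt
  refine ⟨fun v => ⟨f v, by rw [Fintype.card_fin]; exact Nat.lt_succ_of_le (hfn v).1⟩,
    fun u v huv => hf (Fin.val_eq_of_eq huv), ?_⟩
  simp only [← hg]
  refine abs_eCount_pathGraph_sub_le_one n g fun j hj => ?_
  have h₀ := (hfn ⟨2 * j, by omega⟩).2 (by simp)
  have h₂ := (hfn ⟨2 * j + 2, by omega⟩).2 (by simp)
  simp only [g, dif_pos (show 2 * j < n by omega), dif_pos hj]
  simp only at h₀ h₂
  omega

/-- every path graph on `n ≥ 1` vertices is Perrin cordial. -/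
theorem pathGraph_isPerrinCordial (n : ℕ) (hn : 1 ≤ n) :
    IsPerrinCordial (SimpleGraph.pathGraph n) :=
  pathGraph_isPerrinCordial_general n
end

section
/- Let n be a natural number with n ≥ 3 and n ≡ 2 (mod 4), and let C_n be the cycle graph on n vertices. Then for every injective function f : V(C_n) → {0, 1, ..., n}, the induced edge labeling f*(uv) = (P (f u) + P (f v)) mod 2 satisfies e_f(0) − e_f(1) ≡ 2 (mod 4), where e_f(i) is the number of edges uv with f*(uv) = i. In particular no such f is a Perrin cordial labeling. -/
lemma cycle_edgeSet (m : ℕ) :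
    (SimpleGraph.cycleGraph (m+1+2)).edgeSet
      = Set.range (fun i : Fin (m+1+2) => s(i, i+1)) := by
  ext e
  induction e using Sym2.ind with
  | _ u v =>
    rw [SimpleGraph.mem_edgeSet, SimpleGraph.cycleGraph_adj, Set.mem_range]
    constructor
    · rintro (h | h)
      · exact ⟨v, by rw [sub_eq_iff_eq_add] at h; rw [h]; simp [Sym2.eq_iff, add_comm]⟩
      · exact ⟨u, by rw [sub_eq_iff_eq_add] at h; rw [h]; simp [Sym2.eq_iff, add_comm]⟩
    · rintro ⟨i, hi⟩
      rw [Sym2.eq_iff] at hi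
      rcases hi with ⟨rfl, rfl⟩ | ⟨rfl, rfl⟩
      · right; exact add_sub_cancel_left _ _
      · left; exact add_sub_cancel_left _ _

lemma E_inj (m : ℕ) : Function.Injective (fun i : Fin (m+1+2) => s(i, i+1)) := by
  intro i j hij
  simp only [Sym2.eq_iff] at hij
  rcases hij with ⟨h, _⟩ | ⟨h1, h2⟩
  · exact h
  · exfalso
    rw [h1] at h2
    have h4 : (2 : Fin (m+1+2)) = 0 := by
      have h3 : (1 + 1 : Fin (m+1+2)) = 0 := add_left_cancel (a := j) (by rw [← add_assoc, h2, add_zero])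
      rw [← h3]; ext; simp [Fin.val_add, Nat.mod_eq_of_lt (show 1 < m+1+2 by omega), Nat.mod_eq_of_lt (show 2 < m+1+2 by omega)]
    simp [Fin.ext_iff] at h4
    exact absurd h4 (by rw [Nat.mod_eq_of_lt (by omega)]; omega)

lemma eCount_eq (m : ℕ) (g : Fin (m+1+2) → ℕ) (c : ℕ) :
    eCount (SimpleGraph.cycleGraph (m+1+2)) g c
      = (Finset.univ.filter
          (fun i : Fin (m+1+2) => (perrin (g i) + perrin (g (i+1))) % 2 = c)).card := by
  classical
  set E : Fin (m+1+2) → Sym2 (Fin (m+1+2)) := fun i => s(i, i+1) with hE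
  have hset : {e | e ∈ (SimpleGraph.cycleGraph (m+1+2)).edgeSet ∧ perrinEdgeLabel g e = c}
      = E '' {i | (perrin (g i) + perrin (g (i+1))) % 2 = c} := by
    ext e
    simp only [Set.mem_setOf_eq, cycle_edgeSet, Set.mem_range, Set.mem_image]
    constructor
    · rintro ⟨⟨i, rfl⟩, hl⟩
      exact ⟨i, by simpa [perrinEdgeLabel, E] using hl, rfl⟩
    · rintro ⟨i, hi, rfl⟩
      exact ⟨⟨i, rfl⟩, by simpa [perrinEdgeLabel, E] using hi⟩
  rw [eCount, hset, Set.ncard_image_of_injective _ (E_inj m),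
    Set.ncard_eq_toFinset_card']
  congr 1
  ext i
  simp

/-- for `n ≡ 2 (mod 4)`, every injective labeling of the cycle `C n` has
`e_f(0) - e_f(1) ≡ 2 (mod 4)`; in particular it is not a Perrin cordial labeling. -/
theorem cycleGraph_imbalance_mod_four (n : ℕ) (hn : 3 ≤ n) (h : n % 4 = 2)
    (f : Fin n → Fin (n + 1)) (hf : Function.Injective f) :
    ((eCount (SimpleGraph.cycleGraph n) (fun v => (f v : ℕ)) 0 : ℤ) -
        (eCount (SimpleGraph.cycleGraph n) (fun v => (f v : ℕ)) 1 : ℤ)) % 4 = 2 ∧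
    ¬ |(eCount (SimpleGraph.cycleGraph n) (fun v => (f v : ℕ)) 0 : ℤ) -
        (eCount (SimpleGraph.cycleGraph n) (fun v => (f v : ℕ)) 1 : ℤ)| ≤ 1 := by
  classical
  obtain ⟨m, rfl⟩ : ∃ m, n = m + 1 + 2 := ⟨n - 3, by omega⟩
  set g : Fin (m+1+2) → ℕ := fun v => (f v : ℕ) with hg
  set L : Fin (m+1+2) → ℕ := fun i => (perrin (g i) + perrin (g (i+1))) % 2 with hL
  have hL01 : ∀ i, L i = 0 ∨ L i = 1 := by
    intro i
    have h2 : (perrin (g i) + perrin (g (i+1))) % 2 < 2 :=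
      Nat.mod_lt _ (by norm_num)
    simp only [hL]
    omega
  have he0 : eCount (SimpleGraph.cycleGraph (m+1+2)) g 0
      = (Finset.univ.filter (fun i => L i = 0)).card := eCount_eq m g 0
  have he1 : eCount (SimpleGraph.cycleGraph (m+1+2)) g 1
      = (Finset.univ.filter (fun i => L i = 1)).card := eCount_eq m g 1
  -- total
  have htot : (Finset.univ.filter (fun i => L i = 0)).card
      + (Finset.univ.filter (fun i => L i = 1)).card = m + 1 + 2 := by
    rw [← Finset.card_union_of_disjoint (by
      simp only [Finset.disjoint_filter, Finset.mem_filter]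
      omega )]
    rw [show (Finset.univ.filter (fun i => L i = 0)) ∪ (Finset.univ.filter (fun i => L i = 1))
        = Finset.univ from by
      ext i; simp; exact hL01 i]
    simp
  -- e1 as a sum
  have hsum : (Finset.univ.filter (fun i => L i = 1)).card = ∑ i, L i := by
    rw [Finset.card_filter]
    apply Finset.sum_congr rfl
    intro i _
    rcases hL01 i with hh | hh <;> simp [hh]
  -- sum is even
  have heven : 2 ∣ ∑ i, L i := by
    have hz : ((∑ i, L i : ℕ) : ZMod 2) = 0 := by
      push_cast
      have : ∀ i : Fin (m+1+2), ((L i : ℕ) : ZMod 2)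
          = ((perrin (g i) : ℕ) : ZMod 2) + ((perrin (g (i+1)) : ℕ) : ZMod 2) := by
        intro i
        rw [hL]
        push_cast [Nat.cast_add]
        rw [ZMod.natCast_mod]
        push_cast
        ring
      rw [Finset.sum_congr rfl (fun i _ => this i), Finset.sum_add_distrib]
      have hre : (∑ i : Fin (m+1+2), ((perrin (g (i+1)) : ℕ) : ZMod 2))
          = ∑ i : Fin (m+1+2), ((perrin (g i) : ℕ) : ZMod 2) := by
        apply Finset.sum_bijective (fun i => i + 1)
          (Equiv.addRight (1 : Fin (m+1+2))).bijective
        · simp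
        · intro i _; rfl
      rw [hre, ← two_mul]
      have h20 : (2 : ZMod 2) = 0 := by decide
      rw [h20, zero_mul]
    exact (ZMod.natCast_eq_zero_iff _ 2).mp hz
  obtain ⟨k, hk⟩ := heven
  rw [hsum] at he1
  set e0 := eCount (SimpleGraph.cycleGraph (m+1+2)) g 0
  set e1 := eCount (SimpleGraph.cycleGraph (m+1+2)) g 1
  have h1 : e0 + e1 = m + 1 + 2 := by rw [he0, he1, ← hsum]; exact htot
  have h2 : e1 = 2 * k := by rw [he1, hk]
  constructor
  · have : (e0 : ℤ) - e1 = (m+1+2 : ℕ) - 2 * e1 := by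
      push_cast
      omega
    rw [this]
    have hm : (m + 1 + 2) % 4 = 2 := h
    omega
  · intro habs
    rw [abs_le] at habs
    have : ((e0 : ℤ) - e1) % 4 = 2 := by
      have : (e0 : ℤ) - e1 = (m+1+2 : ℕ) - 2 * e1 := by push_cast; omega
      rw [this]; omega
    omega
end

section
/- Let m and n be odd positive natural numbers. The complete bipartite graph K_{m,n} is Perrin cordial if one of the following holds: m+n ≤ 28 when m+n ≡ 0 (mod 7); m+n ≤ 22 when m+n ≡ 1 (mod 7); m+n ≤ 30 when m+n ≡ 2 (mod 7); m+n ≤ 38 when m+n ≡ 3 (mod 7); m+n ≤ 32 when m+n ≡ 4 (mod 7); m+n ≤ 40 when m+n ≡ 5 (mod 7); m+n ≤ 34 when m+n ≡ 6 (mod 7). -/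
open Finset

theorem card_filter_mod_two_sub_card_filter_mod_two {ι : Type*} (s : Finset ι) (g : ι → ℕ) :
    (#{x ∈ s | g x % 2 = 0} : ℤ) - #{x ∈ s | g x % 2 = 1} = ∑ x ∈ s, (-1) ^ g x := by
  have hsign : ∀ x, (-1 : ℤ) ^ g x = if g x % 2 = 0 then 1 else -1 := fun x => by
    rcases Nat.mod_two_eq_zero_or_one (g x) with h | h <;>
      simp [neg_one_pow_eq_pow_mod_two (g x), h]
  simp only [hsign, sum_ite, sum_const, Nat.mod_two_ne_zero, smul_neg]
  ring

theorem sum_neg_one_pow_of_even_iff_mem {ι : Type*} [Fintype ι] (g : ι → ℕ) (A : Finset ι)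
    (hg : ∀ i, Even (g i) ↔ i ∈ A) :
    ∑ i, (-1 : ℤ) ^ g i = 2 * #A - Fintype.card ι := by
  classical
  have hsign : ∀ i, (-1 : ℤ) ^ g i = if i ∈ A then 1 else -1 := fun i => by
    by_cases hi : i ∈ A
    · simp [hi, ((hg i).2 hi).neg_one_pow]
    · simp [hi, (Nat.not_even_iff_odd.1 (mt (hg i).1 hi)).neg_one_pow]
  simp only [hsign, sum_ite, sum_const, filter_mem_eq_inter, univ_inter, filter_not,
    ← compl_eq_univ_sdiff, card_compl, nsmul_eq_mul, mul_one, mul_neg,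
    Nat.cast_sub (card_le_univ A)]
  ring

theorem exists_embedding_forall_iff_of_card_le {V L : Type*} [Fintype V] [Fintype L]
    (p : L → Prop) (q : V → Prop) [DecidablePred p] [DecidablePred q]
    (h : #{v | q v} ≤ #{l | p l}) (h' : #{v | ¬q v} ≤ #{l | ¬p l}) :
    ∃ f : V ↪ L, ∀ v, p (f v) ↔ q v := by
  simp only [← Fintype.card_subtype] at h h'
  obtain ⟨e⟩ := Function.Embedding.nonempty_of_card_le h
  obtain ⟨e'⟩ := Function.Embedding.nonempty_of_card_le h'
  refine ⟨(Equiv.sumCompl q).symm.toEmbedding.trans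
    ((e.sumMap e').trans (Equiv.sumCompl p).toEmbedding), fun v => ?_⟩
  by_cases hv : q v
  · simp [Equiv.sumCompl_symm_apply_of_pos hv, hv, (e _).2]
  · simp [Equiv.sumCompl_symm_apply_of_neg hv, hv, (e' _).2]

def evenPerrinCount (N : ℕ) : ℕ := #{k : Fin (N + 1) | Even (perrin k)}

theorem evenPerrinCount_add_card_filter_not_even (N : ℕ) :
    evenPerrinCount N + #{k : Fin (N + 1) | ¬Even (perrin k)} = N + 1 := by
  simpa [evenPerrinCount] using
    card_filter_add_card_filter_not (s := univ) fun k : Fin (N + 1) => Even (perrin k)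

/- `perrin k % 2` has period 7 from `k = 1` on, with three even terms per period, so
`evenPerrinCount N` grows like `3N/7`. For even `N` the lower bound fails exactly at `N = 36` and
for `N ≥ 42`, which is where the bounds on `N` come from. -/
theorem evenPerrinCount_bounds_of_mod_seven (N : ℕ)
    (h : (N % 7 = 0 ∧ N ≤ 28) ∨ (N % 7 = 1 ∧ N ≤ 22) ∨ (N % 7 = 2 ∧ N ≤ 30) ∨
      (N % 7 = 3 ∧ N ≤ 38) ∨ (N % 7 = 4 ∧ N ≤ 32) ∨ (N % 7 = 5 ∧ N ≤ 40) ∨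
      (N % 7 = 6 ∧ N ≤ 34)) :
    N / 2 ≤ evenPerrinCount N + 1 ∧ evenPerrinCount N ≤ N / 2 + 2 := by
  have hN : N ≤ 40 := by omega
  revert h
  interval_cases N <;> decide

section CompleteBipartite

variable {α β : Type*} [Fintype α] [Fintype β]

theorem eCount_completeBipartiteGraph (f : α ⊕ β → ℕ) (i : ℕ) :
    eCount (completeBipartiteGraph α β) f i =
      #{x : α × β | (perrin (f (.inl x.1)) + perrin (f (.inr x.2))) % 2 = i} := by
  have hinj : Function.Injective fun x : α × β => s(Sum.inl x.1, (Sum.inr x.2 : α ⊕ β)) := by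
    rintro ⟨a, b⟩ ⟨a', b'⟩ h
    simpa using h
  rw [eCount, SimpleGraph.edgeSet_completeBipartiteGraph, ← Set.ncard_coe_finset,
    ← Set.ncard_image_of_injective _ hinj]
  congr 1
  ext e
  simp only [Set.mem_ofPred_eq, Set.mem_range, Prod.exists, Set.mem_image, coe_filter, mem_univ,
    true_and]
  constructor
  · rintro ⟨⟨a, b, rfl⟩, h⟩
    exact ⟨a, b, h, rfl⟩
  · rintro ⟨a, b, h, rfl⟩
    exact ⟨⟨a, b, rfl⟩, h⟩

theorem eCount_zero_sub_eCount_one_completeBipartiteGraph (f : α ⊕ β → ℕ) :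
    (eCount (completeBipartiteGraph α β) f 0 : ℤ) - eCount (completeBipartiteGraph α β) f 1 =
      (∑ a, (-1) ^ perrin (f (.inl a))) * ∑ b, (-1) ^ perrin (f (.inr b)) := by
  rw [eCount_completeBipartiteGraph, eCount_completeBipartiteGraph,
    card_filter_mod_two_sub_card_filter_mod_two, sum_mul_sum, Fintype.sum_prod_type]
  simp only [pow_add]

theorem isPerrinCordial_completeBipartiteGraph_of_le (a b : ℕ) (ha : a ≤ Fintype.card α)
    (hb : b ≤ Fintype.card β)
    (hE : a + b ≤ evenPerrinCount (Fintype.card α + Fintype.card β))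
    (hE' : evenPerrinCount (Fintype.card α + Fintype.card β) ≤ a + b + 1)
    (hαa : |(2 * a - Fintype.card α : ℤ)| ≤ 1) (hβb : |(2 * b - Fintype.card β : ℤ)| ≤ 1) :
    IsPerrinCordial (completeBipartiteGraph α β) := by
  classical
  obtain ⟨A, -, rfl⟩ := exists_subset_card_eq (s := (univ : Finset α)) (by simpa using ha)
  obtain ⟨B, -, rfl⟩ := exists_subset_card_eq (s := (univ : Finset β)) (by simpa using hb)
  rw [← Fintype.card_sum] at hE hE'
  have hEven : #{v | v ∈ A.disjSum B} ≤ evenPerrinCount (Fintype.card (α ⊕ β)) := by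
    simpa using hE
  have hOdd : #{v | v ∉ A.disjSum B} ≤
      #{k : Fin (Fintype.card (α ⊕ β) + 1) | ¬Even (perrin k)} := by
    have := evenPerrinCount_add_card_filter_not_even (Fintype.card (α ⊕ β))
    rw [filter_not, filter_mem_eq_inter, univ_inter, card_univ_sdiff, card_disjSum]
    omega
  obtain ⟨f, hf⟩ := exists_embedding_forall_iff_of_card_le _ _ hEven hOdd
  refine ⟨f, f.injective, ?_⟩
  rw [eCount_zero_sub_eCount_one_completeBipartiteGraph,
    sum_neg_one_pow_of_even_iff_mem _ A fun a => by simpa using hf (.inl a),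
    sum_neg_one_pow_of_even_iff_mem _ B fun b => by simpa using hf (.inr b), abs_mul]
  exact mul_le_one₀ hαa (abs_nonneg _) hβb

theorem isPerrinCordial_completeBipartiteGraph_of_odd (hα : Odd (Fintype.card α))
    (hβ : Odd (Fintype.card β))
    (hE : (Fintype.card α + Fintype.card β) / 2 ≤
      evenPerrinCount (Fintype.card α + Fintype.card β) + 1)
    (hE' : evenPerrinCount (Fintype.card α + Fintype.card β) ≤
      (Fintype.card α + Fintype.card β) / 2 + 2) :
    IsPerrinCordial (completeBipartiteGraph α β) := by
  obtain ⟨p, hp⟩ := hα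
  obtain ⟨q, hq⟩ := hβ
  set E := evenPerrinCount (Fintype.card α + Fintype.card β)
  obtain ⟨a, b, ha, hb, hab, hab'⟩ : ∃ a b, (a = p ∨ a = p + 1) ∧ (b = q ∨ b = q + 1) ∧
      a + b ≤ E ∧ E ≤ a + b + 1 := by
    rcases (show E ≤ p + q + 1 ∨ E = p + q + 2 ∨ E = p + q + 3 by omega) with hc | hc | hc
    exacts [⟨p, q, by omega⟩, ⟨p + 1, q, by omega⟩, ⟨p + 1, q + 1, by omega⟩]
  exact isPerrinCordial_completeBipartiteGraph_of_le a b (by omega) (by omega) hab hab'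
    (by rw [hp, abs_le]; push_cast; omega) (by rw [hq, abs_le]; push_cast; omega)

end CompleteBipartite

theorem completeBipartiteGraph_isPerrinCordial_of_odd_odd_general (m n : ℕ)
    (hmo : Odd m) (hno : Odd n)
    (h : ((m + n) % 7 = 0 ∧ m + n ≤ 28) ∨
         ((m + n) % 7 = 1 ∧ m + n ≤ 22) ∨
         ((m + n) % 7 = 2 ∧ m + n ≤ 30) ∨
         ((m + n) % 7 = 3 ∧ m + n ≤ 38) ∨
         ((m + n) % 7 = 4 ∧ m + n ≤ 32) ∨
         ((m + n) % 7 = 5 ∧ m + n ≤ 40) ∨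
         ((m + n) % 7 = 6 ∧ m + n ≤ 34)) :
    IsPerrinCordial (completeBipartiteGraph (Fin m) (Fin n)) := by
  obtain ⟨hE, hE'⟩ := evenPerrinCount_bounds_of_mod_seven (m + n) h
  apply isPerrinCordial_completeBipartiteGraph_of_odd <;> simpa

/-- for odd positive `m`, `n`, the graph `K_{m,n}` is Perrin cordial if one of
the listed conditions on `m + n` modulo `7` holds. -/
theorem completeBipartiteGraph_isPerrinCordial_of_odd_odd (m n : ℕ)
    (hm : 0 < m) (hn : 0 < n) (hmo : Odd m) (hno : Odd n)
    (h : ((m + n) % 7 = 0 ∧ m + n ≤ 28) ∨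
         ((m + n) % 7 = 1 ∧ m + n ≤ 22) ∨
         ((m + n) % 7 = 2 ∧ m + n ≤ 30) ∨
         ((m + n) % 7 = 3 ∧ m + n ≤ 38) ∨
         ((m + n) % 7 = 4 ∧ m + n ≤ 32) ∨
         ((m + n) % 7 = 5 ∧ m + n ≤ 40) ∨
         ((m + n) % 7 = 6 ∧ m + n ≤ 34)) :
    IsPerrinCordial (completeBipartiteGraph (Fin m) (Fin n)) :=
  completeBipartiteGraph_isPerrinCordial_of_odd_odd_general m n hmo hno h
end
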